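/- Let Γ be the ℤ-grading of K[x,y,z] with deg x = 3, deg y = 1, deg z = -1. The Nagata automorphism σ (σ(x) = x - x²z³ - y⁴z - 2xyz - 2y³ - 2xy²z², σ(y) = y + xz² + y²z, σ(z) = z) equals α⁻¹(τ⁻¹∘θ∘τ) where τ = (u + v², v) and θ = (u, u + v); i.e., substituting z = 1 into (σ(x), σ(y)) yields exactly (τ⁻¹∘θ∘τ)(u, v), and σ(x), σ(y), σ(z) are homogeneous of degrees 3, 1, -1. -/
import Mathlib


open MvPolynomial

variable {K : Type*}

/-- Homogeneity for the ℤ-grading of `K[x,y,z]` with `deg x = 3, deg y = 1, deg z = -1`. -/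
def IsWtHom [CommRing K] (p : MvPolynomial (Fin 3) K) (d : ℤ) : Prop :=
  ∀ m ∈ p.support, 3 * (m 0 : ℤ) + (m 1 : ℤ) - (m 2 : ℤ) = d

/-- The substitution `z = 1`. -/
noncomputable def subZ [CommRing K] :
    MvPolynomial (Fin 3) K →ₐ[K] MvPolynomial (Fin 2) K :=
  aeval ![X 0, X 1, 1]

/-- The Nagata map. -/
noncomputable def nagata (K : Type*) [CommRing K] :
    MvPolynomial (Fin 3) K →ₐ[K] MvPolynomial (Fin 3) K :=
  aeval ![X 0 - (X 0)^2 * (X 2)^3 - (X 1)^4 * X 2 - 2 * X 0 * X 1 * X 2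
            - 2 * (X 1)^3 - 2 * X 0 * (X 1)^2 * (X 2)^2,
          X 1 + X 0 * (X 2)^2 + (X 1)^2 * X 2,
          X 2]

/-- The weight vector `(3, 1, -1)`. -/
private abbrev w3 : Fin 3 → ℤ := ![3, 1, -1]

private lemma wt_eq (m : Fin 3 →₀ ℕ) :
    Finsupp.weight w3 m = 3 * (m 0 : ℤ) + (m 1 : ℤ) - (m 2 : ℤ) := by
  rw [Finsupp.weight_apply, Finsupp.sum_fintype]
  · simp [Fin.sum_univ_three, w3]
    ring
  · intro i; simp

private lemma toIsWtHom [CommRing K] {p : MvPolynomial (Fin 3) K} {d : ℤ}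
    (h : p.IsWeightedHomogeneous w3 d) : IsWtHom p d := fun m hm => by
  rw [← wt_eq]; exact h (mem_support_iff.mp hm)

private lemma IWH_neg [CommRing K] {p : MvPolynomial (Fin 3) K} {d : ℤ}
    (h : p.IsWeightedHomogeneous w3 d) : (-p).IsWeightedHomogeneous w3 d := by
  intro m hm
  exact h (by simpa using hm)

private lemma IWH_sub [CommRing K] {p q : MvPolynomial (Fin 3) K} {d : ℤ}
    (hp : p.IsWeightedHomogeneous w3 d) (hq : q.IsWeightedHomogeneous w3 d) :
    (p - q).IsWeightedHomogeneous w3 d := by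
  rw [sub_eq_add_neg]; exact hp.add (IWH_neg hq)

private lemma IWH_pow [CommRing K] {p : MvPolynomial (Fin 3) K} {d : ℤ}
    (h : p.IsWeightedHomogeneous w3 d) (n : ℕ) :
    (p ^ n).IsWeightedHomogeneous w3 (n * d) := by
  induction n with
  | zero => simpa using isWeightedHomogeneous_one K w3
  | succ k ih =>
    have h2 : ((k + 1 : ℕ) : ℤ) * d = k * d + d := by push_cast; ring
    rw [pow_succ, h2]
    exact ih.mul h

private lemma IWH_two_mul [CommRing K] {p : MvPolynomial (Fin 3) K} {d : ℤ}
    (h : p.IsWeightedHomogeneous w3 d) : (2 * p).IsWeightedHomogeneous w3 d := by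
  rw [show (2 : MvPolynomial (Fin 3) K) = C 2 from (map_ofNat C 2).symm]
  simpa using (isWeightedHomogeneous_C w3 (2 : K)).mul h

private lemma IWH_of_eq [CommRing K] {p : MvPolynomial (Fin 3) K} {d e : ℤ}
    (h : p.IsWeightedHomogeneous w3 d) (hde : d = e) : p.IsWeightedHomogeneous w3 e := hde ▸ h

private lemma IWH_X [CommRing K] (i : Fin 3) :
    (X i : MvPolynomial (Fin 3) K).IsWeightedHomogeneous w3 (w3 i) :=
  isWeightedHomogeneous_X K w3 i

/-- for the grading `(3, 1, -1)`, the Nagata automorphism equals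
`α⁻¹(τ⁻¹∘θ∘τ)` with `τ = (u + v², v)`, `θ = (u, u + v)`: substituting `z = 1` into
`(σ(x), σ(y))` yields exactly `(τ⁻¹∘θ∘τ)(u, v)`, and `σ(x), σ(y), σ(z)` are
homogeneous of degrees `3, 1, -1`. -/
theorem nagata_is_lift_of_conjugate [Field K] [CharZero K] :
    let T : MvPolynomial (Fin 2) K →ₐ[K] MvPolynomial (Fin 2) K :=
      aeval ![X 0 + (X 1)^2, X 1]
    let Tinv : MvPolynomial (Fin 2) K →ₐ[K] MvPolynomial (Fin 2) K :=
      aeval ![X 0 - (X 1)^2, X 1]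
    let Θ : MvPolynomial (Fin 2) K →ₐ[K] MvPolynomial (Fin 2) K :=
      aeval ![X 0, X 0 + X 1]
    -- the polynomial map `τ⁻¹∘θ∘τ` corresponds to the substitution `T.comp (Θ.comp Tinv)`
    let Ψ := T.comp (Θ.comp Tinv)
    subZ (nagata K (X 0)) = Ψ (X 0) ∧
    subZ (nagata K (X 1)) = Ψ (X 1) ∧
    subZ (nagata K (X 2)) = 1 ∧
    IsWtHom (nagata K (X 0)) 3 ∧ IsWtHom (nagata K (X 1)) 1 ∧
    IsWtHom (nagata K (X 2)) (-1) := by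
  intro T Tinv Θ Ψ
  have hx : nagata K (X 0) =
      X 0 - (X 0)^2 * (X 2)^3 - (X 1)^4 * X 2 - 2 * X 0 * X 1 * X 2
        - 2 * (X 1)^3 - 2 * X 0 * (X 1)^2 * (X 2)^2 := by
    rw [nagata]
    simp only [aeval_X, Matrix.cons_val_zero]
  have hy : nagata K (X 1) = X 1 + X 0 * (X 2)^2 + (X 1)^2 * X 2 := by
    simp [nagata]
  have hz : nagata K (X 2) = X 2 := by simp [nagata]
  refine ⟨?_, ?_, ?_, ?_, ?_, ?_⟩
  · rw [hx]
    simp only [Ψ, T, Tinv, Θ, AlgHom.comp_apply, subZ, map_sub, map_add, map_mul, map_pow,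
      map_ofNat, aeval_X, Matrix.cons_val_zero, Matrix.cons_val_one, Matrix.head_cons,
      Matrix.cons_val_two, Matrix.tail_cons]
    ring
  · rw [hy]
    simp only [Ψ, T, Tinv, Θ, AlgHom.comp_apply, subZ, map_sub, map_add, map_mul, map_pow,
      aeval_X, Matrix.cons_val_zero, Matrix.cons_val_one, Matrix.head_cons,
      Matrix.cons_val_two, Matrix.tail_cons]
    ring
  · rw [hz]
    simp [subZ]
  · rw [hx]
    refine toIsWtHom ?_
    have h0 := IWH_X (K := K) 0
    have h1 := IWH_X (K := K) 1
    have h2 := IWH_X (K := K) 2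
    simp only [w3, Matrix.cons_val_zero, Matrix.cons_val_one, Matrix.head_cons,
      Matrix.cons_val_two, Matrix.tail_cons] at h0 h1 h2
    refine IWH_sub (IWH_sub (IWH_sub (IWH_sub (IWH_sub h0 ?_) ?_) ?_) ?_) ?_
    · exact IWH_of_eq ((IWH_pow h0 2).mul (IWH_pow h2 3)) (by norm_num)
    · exact IWH_of_eq ((IWH_pow h1 4).mul h2) (by norm_num)
    · rw [show (2:MvPolynomial (Fin 3) K) * X 0 * X 1 * X 2 = 2 * (X 0 * X 1 * X 2) by ring]
      exact IWH_of_eq (IWH_two_mul ((h0.mul h1).mul h2)) (by norm_num)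
    · exact IWH_of_eq (IWH_two_mul (IWH_pow h1 3)) (by norm_num)
    · rw [show (2:MvPolynomial (Fin 3) K) * X 0 * (X 1)^2 * (X 2)^2 = 2 * (X 0 * (X 1)^2 * (X 2)^2) by ring]
      exact IWH_of_eq (IWH_two_mul ((h0.mul (IWH_pow h1 2)).mul (IWH_pow h2 2))) (by norm_num)
  · rw [hy]
    refine toIsWtHom ?_
    have h0 := IWH_X (K := K) 0
    have h1 := IWH_X (K := K) 1
    have h2 := IWH_X (K := K) 2
    simp only [w3, Matrix.cons_val_zero, Matrix.cons_val_one, Matrix.head_cons,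
      Matrix.cons_val_two, Matrix.tail_cons] at h0 h1 h2
    refine h1.add ?_ |>.add ?_
    · exact IWH_of_eq (h0.mul (IWH_pow h2 2)) (by norm_num)
    · exact IWH_of_eq ((IWH_pow h1 2).mul h2) (by norm_num)
  · rw [hz]
    refine toIsWtHom ?_
    have h2 := IWH_X (K := K) 2
    simpa using h2
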